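/- Define V : List (ℝ × ℝ) → ℕ → ℝ by V([], n) = 0, V(l, 0) = 0, and V((r,p)::l, n+1) = p·(r + V(l, n)) + (1−p)·V((r,p)::l, n). Let l be a list of pairs (r,p) with all r ≥ 0 and all p ∈ [0,1], and let l' be any permutation of l that is sorted in non-increasing order of the product r·p. Then V(l', n) ≥ V(l, n) for every n ∈ ℕ. -/

import Mathlib

/-- `expectedDebt l n` is the expected total collected debt when the AP has `n` time
slots and serves clients in the priority order `l`, each client being a pair `(r, p)` of
its delivery debt and channel reliability: each slot the AP transmits to the first
unserved client, succeeding with probability `p`, collecting `r` upon success. -/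
noncomputable def expectedDebt : List (ℝ × ℝ) → ℕ → ℝ
  | [], _ => 0
  | _ :: _, 0 => 0
  | (r, p) :: l, n + 1 =>
      p * (r + expectedDebt l n) + (1 - p) * expectedDebt ((r, p) :: l) n
  termination_by l n => (l.length, n)

/-!
Swapping two adjacent clients `a, b` changes the payoff in a way that can be tracked slot by slot:
with `c = a.1 a.2 - b.1 b.2`, the difference `D n = V(a::b::l, n) - V(b::a::l, n)` satisfies
`D (n+1) = (1 - a.2) D n + c (1 - b.2)^n`, so it has the sign of `c`. Bubbling the client of
largest product to the front one adjacent swap at a time and inducting on the sorted list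
then gives the theorem.
-/

lemma expectedDebt_zero (l : List (ℝ × ℝ)) : expectedDebt l 0 = 0 := by
  rcases l with _ | ⟨⟨r, p⟩, l⟩ <;> rw [expectedDebt]

lemma expectedDebt_cons_succ (c : ℝ × ℝ) (l : List (ℝ × ℝ)) (n : ℕ) :
    expectedDebt (c :: l) (n + 1)
      = c.2 * (c.1 + expectedDebt l n) + (1 - c.2) * expectedDebt (c :: l) n := by
  obtain ⟨r, p⟩ := c
  rw [expectedDebt]

section Swap

variable (a b : ℝ × ℝ) (l : List (ℝ × ℝ))

/-- The one-client tails enter the two swapped recursions only through this combination, which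
itself obeys `F (n+1) = (1 - b.2) F n - b.2 c`: the common tail `expectedDebt l` cancels. -/
lemma expectedDebt_swap_defect (n : ℕ) :
    a.2 * expectedDebt (b :: l) n - b.2 * expectedDebt (a :: l) n
        - (a.2 - b.2) * expectedDebt (b :: a :: l) n
      = (a.1 * a.2 - b.1 * b.2) * ((1 - b.2) ^ n - 1) := by
  induction n with
  | zero => simp [expectedDebt_zero]
  | succ n ih =>
    simp only [expectedDebt_cons_succ, pow_succ]
    linear_combination (1 - b.2) * ih

lemma expectedDebt_swap_sub_succ (n : ℕ) :
    expectedDebt (a :: b :: l) (n + 1) - expectedDebt (b :: a :: l) (n + 1)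
      = (1 - a.2) * (expectedDebt (a :: b :: l) n - expectedDebt (b :: a :: l) n)
        + (a.1 * a.2 - b.1 * b.2) * (1 - b.2) ^ n := by
  rw [expectedDebt_cons_succ a, expectedDebt_cons_succ b]
  linear_combination expectedDebt_swap_defect a b l n

lemma expectedDebt_swap_le (ha : a.2 ≤ 1) (hb : b.2 ≤ 1) (hab : b.1 * b.2 ≤ a.1 * a.2)
    (n : ℕ) : expectedDebt (b :: a :: l) n ≤ expectedDebt (a :: b :: l) n := by
  induction n with
  | zero => simp [expectedDebt_zero]
  | succ n ih =>
    have hstep := expectedDebt_swap_sub_succ a b l n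
    have hD : 0 ≤ (1 - a.2) * (expectedDebt (a :: b :: l) n - expectedDebt (b :: a :: l) n) :=
      mul_nonneg (by linarith) (by linarith)
    have hc : 0 ≤ (a.1 * a.2 - b.1 * b.2) * (1 - b.2) ^ n :=
      mul_nonneg (by linarith) (pow_nonneg (by linarith) n)
    linarith

end Swap

lemma expectedDebt_cons_mono (c : ℝ × ℝ) (hc : c.2 ∈ Set.Icc (0 : ℝ) 1)
    {l₁ l₂ : List (ℝ × ℝ)} (h : ∀ m, expectedDebt l₁ m ≤ expectedDebt l₂ m) (n : ℕ) :
    expectedDebt (c :: l₁) n ≤ expectedDebt (c :: l₂) n := by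
  induction n with
  | zero => simp [expectedDebt_zero]
  | succ n ih =>
    rw [expectedDebt_cons_succ, expectedDebt_cons_succ]
    gcongr <;> linarith [hc.1, hc.2, h n]

lemma expectedDebt_append_cons_le_cons_append (a : ℝ × ℝ) (ha : a.2 ≤ 1)
    (l₁ l₂ : List (ℝ × ℝ)) (hl₁ : ∀ c ∈ l₁, c.2 ∈ Set.Icc (0 : ℝ) 1 ∧ c.1 * c.2 ≤ a.1 * a.2)
    (n : ℕ) : expectedDebt (l₁ ++ a :: l₂) n ≤ expectedDebt (a :: (l₁ ++ l₂)) n := by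
  induction l₁ generalizing n with
  | nil => rfl
  | cons c l₁ ih =>
    obtain ⟨hc, hca⟩ := hl₁ c List.mem_cons_self
    calc expectedDebt (c :: (l₁ ++ a :: l₂)) n
        ≤ expectedDebt (c :: a :: (l₁ ++ l₂)) n :=
          expectedDebt_cons_mono c hc (ih fun d hd => hl₁ d (List.mem_cons_of_mem c hd)) n
      _ ≤ expectedDebt (a :: c :: (l₁ ++ l₂)) n :=
          expectedDebt_swap_le a c _ ha hc.2 hca n

theorem expectedDebt_le_of_perm_of_pairwise (l l' : List (ℝ × ℝ))
    (hl : ∀ x ∈ l, x.2 ∈ Set.Icc (0 : ℝ) 1) (hperm : l'.Perm l)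
    (hsorted : l'.Pairwise fun a b => b.1 * b.2 ≤ a.1 * a.2) (n : ℕ) :
    expectedDebt l n ≤ expectedDebt l' n := by
  induction l' generalizing l n with
  | nil => rw [hperm.symm.eq_nil]
  | cons a l' ih =>
    obtain ⟨ha_max, hsorted'⟩ := List.pairwise_cons.mp hsorted
    obtain ⟨l₁, l₂, rfl⟩ := List.append_of_mem (hperm.subset List.mem_cons_self)
    have hperm' : l'.Perm (l₁ ++ l₂) := (hperm.trans List.perm_middle).cons_inv
    have hsub : l₁ ++ l₂ ⊆ l₁ ++ a :: l₂ := fun x hx =>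
      List.perm_middle.symm.subset (List.mem_cons_of_mem a hx)
    have hbubble : ∀ c ∈ l₁, c.2 ∈ Set.Icc (0 : ℝ) 1 ∧ c.1 * c.2 ≤ a.1 * a.2 := fun c hc =>
      have hcl : c ∈ l₁ ++ a :: l₂ := List.mem_append_left _ hc
      ⟨hl c hcl, (List.mem_cons.mp (hperm.symm.subset hcl)).elim (fun h => h ▸ le_rfl)
        (ha_max c)⟩
    have ha := hl a (List.mem_append_right _ List.mem_cons_self)
    calc expectedDebt (l₁ ++ a :: l₂) n
        ≤ expectedDebt (a :: (l₁ ++ l₂)) n :=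
          expectedDebt_append_cons_le_cons_append a ha.2 l₁ l₂ hbubble n
      _ ≤ expectedDebt (a :: l') n :=
          expectedDebt_cons_mono a ha (fun m => ih _ (fun x hx => hl x (hsub hx)) hperm'
            hsorted' m) n

/-- Within-period optimality of the joint debt-channel policy: ordering clients in
non-increasing order of the product of delivery debt and channel reliability maximizes
the expected payoff over all priority orderings. -/
theorem expectedDebt_sorted_optimal (l l' : List (ℝ × ℝ))
    (hl : ∀ x ∈ l, 0 ≤ x.1 ∧ x.2 ∈ Set.Icc (0 : ℝ) 1)
    (hperm : l'.Perm l)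
    (hsorted : l'.Pairwise fun a b => b.1 * b.2 ≤ a.1 * a.2)
    (n : ℕ) :
    expectedDebt l' n ≥ expectedDebt l n :=
  expectedDebt_le_of_perm_of_pairwise l l' (fun x hx => (hl x hx).2) hperm hsorted n
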